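/- arXiv:2306.15097 — 8 statements merged into one kernel-verified Lean document; each statement's English description precedes it below -/
import Mathlib

section
/- Let x₀, x₁, x₂, x₃ be points in the Euclidean plane ℝ², and for t ∈ ℝ let T(t) denote the triangle with vertices x₁, x₂, and x₃ + t·(x₂ − x₁), i.e., the convex hull of {x₁, x₂, x₃ + t·(x₂ − x₁)}. Then the function g(t) = ∫_{T(t)} ‖x − x₀‖ dx is convex in t. -/
/-!
The triangle `T(t)` is the image of the standard triangle under the affine map
`y ↦ x₁ + y₀ (x₂ - x₁) + y₁ (x₃ + t (x₂ - x₁) - x₁)`, whose linear part has a determinant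
independent of `t` (a shear does not change area). Changing variables,
`g(t) = |det| ∫_Δ ‖A_t y - x₀‖ dy`, and for each fixed `y` the integrand is the norm of an affine
function of `t`, hence convex in `t`; an integral of convex functions is convex.
-/

open MeasureTheory Real

section ChangeOfVariables

variable {E F : Type*} [NormedAddCommGroup E] [NormedSpace ℝ E] [FiniteDimensional ℝ E]
  [MeasurableSpace E] [BorelSpace E] [NormedAddCommGroup F] [NormedSpace ℝ F]
  (μ : Measure E) [μ.IsAddHaarMeasure]

theorem MeasureTheory.Measure.addHaar_image_affineMap (A : E →ᵃ[ℝ] E) (s : Set E) :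
    μ (A '' s) = ENNReal.ofReal |LinearMap.det A.linear| * μ s := by
  have hA : A '' s = (· + A 0) '' (A.linear '' s) := by
    rw [Set.image_image]
    exact congrArg (· '' s) A.decomp
  rw [hA, Set.image_add_right, measure_preimage_add_right, Measure.addHaar_image_linearMap]

theorem MeasureTheory.setIntegral_image_affineMap (A : E →ᵃ[ℝ] E) {s : Set E}
    (hs : MeasurableSet s) (g : E → F) :
    ∫ x in A '' s, g x ∂μ = |LinearMap.det A.linear| • ∫ y in s, g (A y) ∂μ := by
  by_cases hdet : LinearMap.det A.linear = 0
  · -- a singular `A` maps `s` to a null set, so both sides vanish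
    have hnull : μ (A '' s) = 0 := by simp [Measure.addHaar_image_affineMap μ, hdet]
    simp [Measure.restrict_eq_zero.mpr hnull, hdet]
  have hinj : Function.Injective A := A.linear_injective_iff.mp <| LinearMap.ker_eq_bot.mp <|
    (LinearMap.isUnit_iff_ker_eq_bot _).mp
      ((LinearMap.isUnit_iff_isUnit_det _).mpr (isUnit_iff_ne_zero.mpr hdet))
  have hderiv : ∀ x ∈ s, HasFDerivWithinAt A (LinearMap.toContinuousLinearMap A.linear) s x := by
    intro x _
    rw [A.decomp]
    exact (A.linear.toContinuousLinearMap.hasFDerivAt.add_const (A 0)).hasFDerivWithinAt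
  rw [integral_image_eq_integral_abs_det_fderiv_smul μ hs hderiv hinj.injOn, integral_smul,
    ContinuousLinearMap.det, LinearMap.coe_toContinuousLinearMap]

end ChangeOfVariables

theorem convexOn_integral {V α : Type*} [AddCommGroup V] [Module ℝ V] [MeasurableSpace α]
    {μ : Measure α} {D : Set V} {F : V → α → ℝ} (hD : Convex ℝ D)
    (hF : ∀ y, ConvexOn ℝ D (F · y)) (hint : ∀ t ∈ D, Integrable (F t) μ) :
    ConvexOn ℝ D fun t => ∫ y, F t y ∂μ := by
  refine ⟨hD, fun t₁ h₁ t₂ h₂ a b ha hb hab => ?_⟩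
  have h₁' : Integrable (fun y => a • F t₁ y) μ := (hint t₁ h₁).smul a
  have h₂' : Integrable (fun y => b • F t₂ y) μ := (hint t₂ h₂).smul b
  calc ∫ y, F (a • t₁ + b • t₂) y ∂μ
      ≤ ∫ y, (a • F t₁ y + b • F t₂ y) ∂μ :=
        integral_mono (hint _ (hD h₁ h₂ ha hb hab)) (h₁'.add h₂')
          fun y => (hF y).2 h₁ h₂ ha hb hab
    _ = a • ∫ y, F t₁ y ∂μ + b • ∫ y, F t₂ y ∂μ := by
        rw [integral_add h₁' h₂', integral_smul, integral_smul]

theorem convexOn_norm_add_smul {F : Type*} [SeminormedAddCommGroup F] [NormedSpace ℝ F]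
    (u v : F) : ConvexOn ℝ Set.univ fun t : ℝ => ‖u + t • v‖ := by
  have h := (convexOn_norm convex_univ).comp_affineMap (AffineMap.lineMap u (u + v))
  simpa [Function.comp_def, AffineMap.lineMap_apply_module', add_comm] using h

section Triangle

variable {E : Type*} [AddCommGroup E] [Module ℝ E]

noncomputable def triangleMap (a b c : E) : EuclideanSpace ℝ (Fin 2) →ᵃ[ℝ] E where
  toFun y := a + y 0 • (b - a) + y 1 • (c - a)
  linear := (EuclideanSpace.projₗ (0 : Fin 2)).smulRight (b - a) +
    (EuclideanSpace.projₗ (1 : Fin 2)).smulRight (c - a)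
  map_vadd' y v := by simp; module

@[simp]
theorem triangleMap_apply (a b c : E) (y : EuclideanSpace ℝ (Fin 2)) :
    triangleMap a b c y = a + y 0 • (b - a) + y 1 • (c - a) :=
  rfl

noncomputable def stdTriangle : Set (EuclideanSpace ℝ (Fin 2)) :=
  convexHull ℝ {0, EuclideanSpace.single 0 1, EuclideanSpace.single 1 1}

theorem isCompact_stdTriangle : IsCompact stdTriangle :=
  (Set.toFinite _).isCompact_convexHull ℝ

theorem image_triangleMap_stdTriangle (a b c : E) :
    triangleMap a b c '' stdTriangle = convexHull ℝ {a, b, c} := by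
  rw [stdTriangle, AffineMap.image_convexHull]
  simp [Set.image_insert_eq]

theorem triangleMap_shear_apply (a b c : E) (t : ℝ) (y : EuclideanSpace ℝ (Fin 2)) :
    triangleMap a b (c + t • (b - a)) y = triangleMap a b c y + t • y 1 • (b - a) := by
  simp only [triangleMap_apply]
  module

end Triangle

theorem det_triangleMap_linear (a b c : EuclideanSpace ℝ (Fin 2)) :
    LinearMap.det (triangleMap a b c).linear =
      (b - a) 0 * (c - a) 1 - (c - a) 0 * (b - a) 1 := by
  rw [← LinearMap.det_toMatrix (EuclideanSpace.basisFun (Fin 2) ℝ).toBasis, Matrix.det_fin_two]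
  simp [LinearMap.toMatrix_apply, triangleMap]

theorem det_triangleMap_shear (a b c : EuclideanSpace ℝ (Fin 2)) (t : ℝ) :
    LinearMap.det (triangleMap a b (c + t • (b - a))).linear =
      LinearMap.det (triangleMap a b c).linear := by
  simp only [det_triangleMap_linear, PiLp.add_apply, PiLp.sub_apply, PiLp.smul_apply,
    smul_eq_mul]
  ring

theorem sheared_triangle_fermat_weber_convex
    (x₀ x₁ x₂ x₃ : EuclideanSpace ℝ (Fin 2)) :
    ConvexOn ℝ Set.univ
      (fun t : ℝ =>
        ∫ x in convexHull ℝ {x₁, x₂, x₃ + t • (x₂ - x₁)}, ‖x - x₀‖ ∂volume) := by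
  have hΔ := isCompact_stdTriangle
  simp_rw [← image_triangleMap_stdTriangle,
    setIntegral_image_affineMap volume _ hΔ.isClosed.measurableSet, det_triangleMap_shear,
    triangleMap_shear_apply]
  refine (convexOn_integral convex_univ (fun y => ?_) fun t _ => ?_).smul (abs_nonneg _)
  · simpa only [add_sub_right_comm] using
      convexOn_norm_add_smul (triangleMap x₁ x₂ x₃ y - x₀) (y 1 • (x₂ - x₁))
  · have hT := (triangleMap x₁ x₂ x₃).continuous_of_finiteDimensional
    exact (by fun_prop : Continuous _).continuousOn.integrableOn_compact hΔ
end

section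
/- Let w, h > 0 and let R = [−w/2, w/2] × [−h/2, h/2] be the axis-aligned rectangle of width w and height h centered at the origin in the Euclidean plane. Then ∫_R ‖x‖ dx = (1/6)·h·w·√(h² + w²) + (1/12)·w³·log((√(h² + w²) + h)/w) + (1/12)·h³·log((√(h² + w²) + w)/h), where ‖·‖ is the Euclidean norm. -/
open MeasureTheory Real

-- inner antiderivative
lemma inner_deriv (x : ℝ) (hx : x ≠ 0) (y : ℝ) :
    HasDerivAt (fun y : ℝ => (y * Real.sqrt (x^2 + y^2)
      + x^2 * Real.log (y + Real.sqrt (x^2 + y^2))) / 2)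
      (Real.sqrt (x^2 + y^2)) y := by
  have hx2 : 0 < x^2 := by positivity
  have hs : 0 < Real.sqrt (x^2 + y^2) := Real.sqrt_pos.2 (by positivity)
  have hys : Real.sqrt y ^ 2 ≤ 0 ∨ True := Or.inr trivial
  have habs : |y| ≤ Real.sqrt (x^2+y^2) := by
    rw [← Real.sqrt_sq_eq_abs]
    exact Real.sqrt_le_sqrt (by nlinarith)
  have habs' : |y| < Real.sqrt (x^2+y^2) := by
    rcases lt_or_eq_of_le habs with h | h
    · exact h
    · exfalso
      have := Real.sq_sqrt (by positivity : (0:ℝ) ≤ x^2 + y^2)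
      rw [← h, sq_abs] at this; nlinarith
  have hpos : 0 < y + Real.sqrt (x^2 + y^2) := by
    have := neg_abs_le y; linarith
  have hsq : HasDerivAt (fun y : ℝ => Real.sqrt (x^2 + y^2))
      (2*y / (2 * Real.sqrt (x^2+y^2))) y := by
    have h1 : HasDerivAt (fun y : ℝ => x^2 + y^2) (2*y) y := by
      simpa using ((hasDerivAt_pow 2 y).const_add (x^2))
    exact h1.sqrt (by positivity)
  have hsq' : HasDerivAt (fun y : ℝ => Real.sqrt (x^2 + y^2))
      (y / Real.sqrt (x^2+y^2)) y := by
    convert hsq using 1; field_simp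
  have h2 : HasDerivAt (fun y : ℝ => y * Real.sqrt (x^2 + y^2))
      (Real.sqrt (x^2+y^2) + y * (y / Real.sqrt (x^2+y^2))) y := by
    exact ((hasDerivAt_id y).mul hsq').congr_deriv (by simp)
  have h3 : HasDerivAt (fun y : ℝ => Real.log (y + Real.sqrt (x^2 + y^2)))
      ((1 + y / Real.sqrt (x^2+y^2)) / (y + Real.sqrt (x^2+y^2))) y := by
    exact (((hasDerivAt_id y).add hsq').log (ne_of_gt hpos))
  have := ((h2.add (h3.const_mul (x^2))).div_const 2)
  refine this.congr_deriv ?_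
  have hsne := ne_of_gt hs
  have hsq2 : Real.sqrt (x^2+y^2) ^ 2 = x^2 + y^2 := Real.sq_sqrt (by positivity)
  field_simp
  linear_combination (-Real.sqrt (x^2+y^2) - y) * hsq2

lemma sqrt_gt (x b : ℝ) (hx : x ≠ 0) (hb : 0 ≤ b) : b < Real.sqrt (x^2 + b^2) := by
  have : b = Real.sqrt (b^2) := (Real.sqrt_sq hb).symm
  rw [this]
  exact Real.sqrt_lt_sqrt (by positivity) (by nlinarith [sq_pos_of_ne_zero hx])

lemma inner_int (b : ℝ) (hb : 0 < b) (x : ℝ) (hx : x ≠ 0) :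
    ∫ y in (-b)..b, Real.sqrt (x^2 + y^2)
      = b * Real.sqrt (x^2 + b^2)
        + x^2 * (Real.log (Real.sqrt (x^2 + b^2) + b) - Real.log |x|) := by
  have hcont : Continuous fun y : ℝ => Real.sqrt (x^2 + y^2) :=
    (continuous_const.add (continuous_pow 2)).sqrt
  have key := intervalIntegral.integral_eq_sub_of_hasDerivAt
    (f := fun y : ℝ => (y * Real.sqrt (x^2 + y^2)
      + x^2 * Real.log (y + Real.sqrt (x^2 + y^2))) / 2)
    (fun y _ => inner_deriv x hx y)
    (hcont.intervalIntegrable (-b) b)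
  rw [key]
  have hsb : b < Real.sqrt (x^2 + b^2) := sqrt_gt x b hx hb.le
  have hs0 : 0 < Real.sqrt (x^2 + b^2) := lt_of_le_of_lt hb.le hsb
  rw [show ((-b)^2 : ℝ) = b^2 by ring]
  have hsq2 : Real.sqrt (x^2+b^2) ^ 2 = x^2 + b^2 := Real.sq_sqrt (by positivity)
  have hlog : Real.log (Real.sqrt (x^2+b^2) - b)
      = 2 * Real.log |x| - Real.log (Real.sqrt (x^2+b^2) + b) := by
    have hmul : (Real.sqrt (x^2+b^2) - b) * (Real.sqrt (x^2+b^2) + b) = x^2 := by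
      nlinarith [hsq2]
    have := Real.log_mul (by linarith : Real.sqrt (x^2+b^2) - b ≠ 0)
      (by positivity : Real.sqrt (x^2+b^2) + b ≠ 0)
    rw [hmul] at this
    have hx2 : Real.log (x^2) = 2 * Real.log |x| := by
      rw [show Real.log (x^2) = Real.log (|x|^2) by rw [sq_abs], Real.log_pow]; norm_num
    linarith [this, hx2]
  have : -b + Real.sqrt (x^2+b^2) = Real.sqrt (x^2+b^2) - b := by ring
  rw [this, hlog]
  ring

noncomputable def Hfun (b x : ℝ) : ℝ :=
  2/3 * b * x * Real.sqrt (x^2 + b^2) + b^3/3 * Real.log (x + Real.sqrt (x^2 + b^2))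
    + x^3/3 * Real.log (Real.sqrt (x^2 + b^2) + b) - x^3/3 * Real.log x

lemma Hfun_deriv (b : ℝ) (hb : 0 < b) (x : ℝ) (hx : 0 < x) :
    HasDerivAt (Hfun b)
      (b * Real.sqrt (x^2 + b^2)
        + x^2 * (Real.log (Real.sqrt (x^2 + b^2) + b) - Real.log x)) x := by
  have hs : 0 < Real.sqrt (x^2 + b^2) := Real.sqrt_pos.2 (by positivity)
  have hsq2 : Real.sqrt (x^2+b^2) ^ 2 = x^2 + b^2 := Real.sq_sqrt (by positivity)
  have hxs : 0 < x + Real.sqrt (x^2 + b^2) := by positivity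
  have hsb : 0 < Real.sqrt (x^2 + b^2) + b := by positivity
  have hsqrt : HasDerivAt (fun x : ℝ => Real.sqrt (x^2 + b^2))
      (x / Real.sqrt (x^2+b^2)) x := by
    have h1 : HasDerivAt (fun x : ℝ => x^2 + b^2) (2*x) x := by
      simpa using ((hasDerivAt_pow 2 x).add_const (b^2))
    have := h1.sqrt (by positivity)
    convert this using 1; field_simp
  have h1 : HasDerivAt (fun x : ℝ => 2/3 * b * x * Real.sqrt (x^2 + b^2))
      (2/3 * b * Real.sqrt (x^2+b^2) + 2/3 * b * x * (x / Real.sqrt (x^2+b^2))) x := by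
    have := ((hasDerivAt_id x).const_mul (2/3*b)).mul hsqrt
    refine this.congr_deriv ?_; simp only [id_eq]; ring
  have h2 : HasDerivAt (fun x : ℝ => b^3/3 * Real.log (x + Real.sqrt (x^2 + b^2)))
      (b^3/3 * ((1 + x / Real.sqrt (x^2+b^2)) / (x + Real.sqrt (x^2+b^2)))) x :=
    (((hasDerivAt_id x).add hsqrt).log (ne_of_gt hxs)).const_mul _
  have h3 : HasDerivAt (fun x : ℝ => x^3/3 * Real.log (Real.sqrt (x^2 + b^2) + b))
      (x^2 * Real.log (Real.sqrt (x^2+b^2) + b)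
        + x^3/3 * ((x / Real.sqrt (x^2+b^2)) / (Real.sqrt (x^2+b^2) + b))) x := by
    have hp : HasDerivAt (fun x : ℝ => x^3/3) (x^2) x := by
      have := (hasDerivAt_pow 3 x).div_const 3
      refine this.congr_deriv ?_; push_cast; ring
    have := hp.mul ((hsqrt.add_const b).log (ne_of_gt hsb))
    refine this.congr_deriv ?_; ring
  have h4 : HasDerivAt (fun x : ℝ => x^3/3 * Real.log x)
      (x^2 * Real.log x + x^2/3) x := by
    have hp : HasDerivAt (fun x : ℝ => x^3/3) (x^2) x := by
      have := (hasDerivAt_pow 3 x).div_const 3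
      refine this.congr_deriv ?_; push_cast; ring
    have := hp.mul ((hasDerivAt_id x).log (ne_of_gt hx))
    refine this.congr_deriv ?_; simp only [id_eq]; field_simp
  have hsne := ne_of_gt hs
  have e1 : (1 + x / Real.sqrt (x^2+b^2)) / (x + Real.sqrt (x^2+b^2))
      = 1 / Real.sqrt (x^2+b^2) := by
    field_simp; ring
  have e2 : (x / Real.sqrt (x^2+b^2)) / (Real.sqrt (x^2+b^2) + b)
      = (Real.sqrt (x^2+b^2) - b) / (Real.sqrt (x^2+b^2) * x) := by
    field_simp
    linear_combination (-1) * hsq2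
  rw [e1] at h2
  rw [e2] at h3
  have total := ((h1.add h2).add h3).sub h4
  refine total.congr_deriv ?_
  field_simp
  linear_combination (-b) * hsq2

noncomputable def Ffun (b x : ℝ) : ℝ :=
  b * Real.sqrt (x^2 + b^2)
    + x^2 * (Real.log (Real.sqrt (x^2 + b^2) + b) - Real.log x)

lemma sqrt_ge_b (b : ℝ) (hb : 0 < b) (x : ℝ) : b ≤ Real.sqrt (x^2 + b^2) := by
  have h1 : Real.sqrt (x^2+b^2)^2 = x^2+b^2 := Real.sq_sqrt (by positivity)
  nlinarith [Real.sqrt_nonneg (x^2+b^2)]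

lemma Ffun_cont (b : ℝ) (hb : 0 < b) : Continuous (Ffun b) := by
  have hs : Continuous fun x : ℝ => Real.sqrt (x^2 + b^2) :=
    ((continuous_pow 2).add continuous_const).sqrt
  have harg : ∀ x : ℝ, Real.sqrt (x^2 + b^2) + b ≠ 0 := fun x => by
    have := sqrt_ge_b b hb x; positivity
  have h1 : Continuous fun x : ℝ => x^2 * Real.log (Real.sqrt (x^2+b^2) + b) :=
    (continuous_pow 2).mul ((hs.add continuous_const).log harg)
  have h2 : Continuous fun x : ℝ => x * (x * Real.log x) :=
    continuous_id.mul (Real.continuous_mul_log)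
  have : Ffun b = fun x => b * Real.sqrt (x^2 + b^2)
      + (x^2 * Real.log (Real.sqrt (x^2+b^2) + b) - x * (x * Real.log x)) := by
    funext x; unfold Ffun; ring
  rw [this]
  exact (continuous_const.mul hs).add (h1.sub h2)

lemma Hfun_contOn (b : ℝ) (hb : 0 < b) (a : ℝ) :
    ContinuousOn (Hfun b) (Set.Icc 0 a) := by
  have hs : Continuous fun x : ℝ => Real.sqrt (x^2 + b^2) :=
    ((continuous_pow 2).add continuous_const).sqrt
  have harg : ∀ x : ℝ, Real.sqrt (x^2 + b^2) + b ≠ 0 := fun x => by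
    have := sqrt_ge_b b hb x; positivity
  have t1 : Continuous fun x : ℝ => 2/3 * b * x * Real.sqrt (x^2+b^2) :=
    ((continuous_const.mul continuous_id).mul hs)
  have t2 : ContinuousOn (fun x : ℝ => b^3/3 * Real.log (x + Real.sqrt (x^2+b^2)))
      (Set.Icc 0 a) := by
    apply ContinuousOn.mul continuousOn_const
    apply ContinuousOn.log (continuous_id.add hs).continuousOn
    intro x hx
    have h0 : 0 ≤ x := hx.1
    have := sqrt_ge_b b hb x
    exact ne_of_gt (by show 0 < x + Real.sqrt (x^2+b^2); linarith)
  have t3 : Continuous fun x : ℝ => x^3/3 * Real.log (Real.sqrt (x^2+b^2) + b) :=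
    ((continuous_pow 3).div_const 3).mul ((hs.add continuous_const).log harg)
  have t4 : Continuous fun x : ℝ => x^3/3 * Real.log x := by
    have h2 : Continuous fun x : ℝ => x^2/3 * (x * Real.log x) :=
      ((continuous_pow 2).div_const 3).mul (Real.continuous_mul_log)
    have : (fun x : ℝ => x^3/3 * Real.log x) = fun x => x^2/3 * (x * Real.log x) := by
      funext x; ring
    rw [this]; exact h2
  exact ((t1.continuousOn.add t2).add t3.continuousOn).sub t4.continuousOn

lemma outer_half (b : ℝ) (hb : 0 < b) (a : ℝ) (ha : 0 < a) :
    ∫ x in (0:ℝ)..a, Ffun b x = Hfun b a - Hfun b 0 := by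
  apply intervalIntegral.integral_eq_sub_of_hasDeriv_right_of_le ha.le
    (Hfun_contOn b hb a)
  · intro x hx
    exact ((Hfun_deriv b hb x hx.1).hasDerivWithinAt)
  · exact (Ffun_cont b hb).intervalIntegrable 0 a

lemma Ffun_abs (b x : ℝ) : Ffun b |x|
    = b * Real.sqrt (x^2 + b^2)
      + x^2 * (Real.log (Real.sqrt (x^2 + b^2) + b) - Real.log |x|) := by
  unfold Ffun; rw [sq_abs]

lemma outer_full (b : ℝ) (hb : 0 < b) (a : ℝ) (ha : 0 < a) :
    ∫ x in (-a)..a, Ffun b |x| = 2 * (Hfun b a - Hfun b 0) := by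
  have hcont : Continuous fun x : ℝ => Ffun b |x| :=
    (Ffun_cont b hb).comp continuous_abs
  have hsplit : (∫ x in (-a)..(0:ℝ), Ffun b |x|) + (∫ x in (0:ℝ)..a, Ffun b |x|)
      = ∫ x in (-a)..a, Ffun b |x| :=
    intervalIntegral.integral_add_adjacent_intervals
      (hcont.intervalIntegrable _ _) (hcont.intervalIntegrable _ _)
  have hneg : (∫ x in (-a)..(0:ℝ), Ffun b |x|) = ∫ x in (0:ℝ)..a, Ffun b |x| := by
    have := intervalIntegral.integral_comp_neg (a := 0) (b := a)
      (fun x => Ffun b |x|)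
    simp only [abs_neg, neg_zero] at this
    rw [← this]
  have hpos : (∫ x in (0:ℝ)..a, Ffun b |x|) = ∫ x in (0:ℝ)..a, Ffun b x := by
    apply intervalIntegral.integral_congr
    intro x hx
    rw [Set.uIcc_of_le ha.le] at hx
    simp only []
    rw [abs_of_nonneg hx.1]
  rw [← hsplit, hneg, hpos, outer_half b hb a ha]; ring

lemma key_iterated (a b : ℝ) (ha : 0 < a) (hb : 0 < b) :
    ∫ x in (-a)..a, (∫ y in (-b)..b, Real.sqrt (x^2 + y^2))
      = 2 * (Hfun b a - Hfun b 0) := by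
  have h0 : ∀ᵐ x : ℝ, x ≠ 0 := by
    have : volume ({0} : Set ℝ) = 0 := measure_singleton 0
    simpa [ae_iff] using this
  have hcongr : ∫ x in (-a)..a, (∫ y in (-b)..b, Real.sqrt (x^2 + y^2))
      = ∫ x in (-a)..a, Ffun b |x| := by
    apply intervalIntegral.integral_congr_ae
    filter_upwards [h0] with x hx _
    rw [inner_int b hb x hx, Ffun_abs]
  rw [hcongr, outer_full b hb a ha]

lemma transfer (a b : ℝ) :
    (∫ x in {x : EuclideanSpace ℝ (Fin 2) |
        x 0 ∈ Set.Icc (-a) a ∧ x 1 ∈ Set.Icc (-b) b}, ‖x‖ ∂volume)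
      = ∫ p in (Set.Icc (-a) a) ×ˢ (Set.Icc (-b) b),
          Real.sqrt (p.1^2 + p.2^2) ∂volume := by
  have mp : MeasurePreserving
      ((MeasurableEquiv.toLp 2 (Fin 2 → ℝ)).symm.trans
        (MeasurableEquiv.finTwoArrow (α := ℝ))) volume volume :=
    (volume_preserving_finTwoArrow ℝ).comp
      (EuclideanSpace.volume_preserving_symm_measurableEquiv_toLp (Fin 2))
  set e := (MeasurableEquiv.toLp 2 (Fin 2 → ℝ)).symm.trans
    (MeasurableEquiv.finTwoArrow (α := ℝ))
  have mps := mp.symm e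
  have := mps.setIntegral_preimage_emb (e.symm.measurableEmbedding)
    (fun x : EuclideanSpace ℝ (Fin 2) => ‖x‖)
    {x : EuclideanSpace ℝ (Fin 2) |
        x 0 ∈ Set.Icc (-a) a ∧ x 1 ∈ Set.Icc (-b) b}
  rw [← this]
  have hset : e.symm ⁻¹' {x : EuclideanSpace ℝ (Fin 2) |
      x 0 ∈ Set.Icc (-a) a ∧ x 1 ∈ Set.Icc (-b) b}
      = (Set.Icc (-a) a) ×ˢ (Set.Icc (-b) b) := by
    ext p
    have h0 : (e.symm p) 0 = p.1 := rfl
    have h1 : (e.symm p) 1 = p.2 := rfl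
    simp only [Set.mem_preimage, Set.mem_setOf_eq, h0, h1, Set.mem_prod,
      Set.mem_Icc]
  rw [hset]
  apply setIntegral_congr_fun (by measurability)
  intro p _
  have hnorm : ‖e.symm p‖ = Real.sqrt (p.1^2 + p.2^2) := by
    rw [EuclideanSpace.norm_eq]
    congr 1
    rw [Fin.sum_univ_two]
    have h0 : (e.symm p) 0 = p.1 := rfl
    have h1 : (e.symm p) 1 = p.2 := rfl
    rw [h0, h1, Real.norm_eq_abs, Real.norm_eq_abs, sq_abs, sq_abs]
  exact hnorm

lemma fubini_step (a b : ℝ) (ha : 0 < a) (hb : 0 < b) :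
    (∫ p in (Set.Icc (-a) a) ×ˢ (Set.Icc (-b) b),
        Real.sqrt (p.1^2 + p.2^2) ∂volume)
      = ∫ x in (-a)..a, (∫ y in (-b)..b, Real.sqrt (x^2 + y^2)) := by
  have hcont : Continuous fun p : ℝ × ℝ => Real.sqrt (p.1^2 + p.2^2) :=
    ((continuous_fst.pow 2).add (continuous_snd.pow 2)).sqrt
  have hint : IntegrableOn (fun p : ℝ × ℝ => Real.sqrt (p.1^2 + p.2^2))
      ((Set.Icc (-a) a) ×ˢ (Set.Icc (-b) b)) volume :=
    hcont.continuousOn.integrableOn_compact (isCompact_Icc.prod isCompact_Icc)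
  rw [Measure.volume_eq_prod ℝ ℝ] at hint ⊢
  rw [setIntegral_prod _ hint]
  rw [intervalIntegral.integral_of_le (by linarith : -a ≤ a),
    ← integral_Icc_eq_integral_Ioc]
  apply setIntegral_congr_fun measurableSet_Icc
  intro x _
  show (∫ y in Set.Icc (-b) b, Real.sqrt (x^2 + y^2))
      = ∫ y in (-b)..b, Real.sqrt (x^2 + y^2)
  rw [intervalIntegral.integral_of_le (by linarith : -b ≤ b),
    ← integral_Icc_eq_integral_Ioc]

theorem fermat_weber_rectangle_L2 (w h : ℝ) (hw : 0 < w) (hh : 0 < h) :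
    ∫ x in {x : EuclideanSpace ℝ (Fin 2) |
        x 0 ∈ Set.Icc (-(w / 2)) (w / 2) ∧ x 1 ∈ Set.Icc (-(h / 2)) (h / 2)},
      ‖x‖ ∂volume
      = 1 / 6 * h * w * Real.sqrt (h ^ 2 + w ^ 2)
        + 1 / 12 * w ^ 3 * Real.log ((Real.sqrt (h ^ 2 + w ^ 2) + h) / w)
        + 1 / 12 * h ^ 3 * Real.log ((Real.sqrt (h ^ 2 + w ^ 2) + w) / h) := by
  set a := w / 2 with hadef
  set b := h / 2 with hbdef
  have ha : 0 < a := by positivity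
  have hb : 0 < b := by positivity
  rw [transfer a b, fubini_step a b ha hb, key_iterated a b ha hb]
  set s := Real.sqrt (a^2 + b^2) with hsdef
  have hs : 0 < s := Real.sqrt_pos.2 (by positivity)
  have hS : Real.sqrt (h^2 + w^2) = 2 * s := by
    rw [hsdef, show h^2 + w^2 = 2^2 * (a^2 + b^2) by rw [hadef, hbdef]; ring,
      Real.sqrt_mul (by positivity), Real.sqrt_sq (by norm_num : (0:ℝ) ≤ 2)]
  have hsb : 0 < s + b := by positivity
  have hsa : 0 < s + a := by positivity
  have hlog1 : Real.log ((Real.sqrt (h^2+w^2) + h) / w) = Real.log (s + b) - Real.log a := by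
    rw [hS, show (2*s + h)/w = (s+b)/a by rw [hadef, hbdef]; field_simp,
      Real.log_div (by positivity) (by positivity)]
  have hlog2 : Real.log ((Real.sqrt (h^2+w^2) + w) / h) = Real.log (s + a) - Real.log b := by
    rw [hS, show (2*s + w)/h = (s+a)/b by rw [hadef, hbdef]; field_simp,
      Real.log_div (by positivity) (by positivity)]
  rw [hlog1, hlog2, hS]
  unfold Hfun
  have ha0 : Real.sqrt ((0:ℝ)^2 + b^2) = b := by
    rw [show (0:ℝ)^2 + b^2 = b^2 by ring, Real.sqrt_sq hb.le]
  rw [ha0]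
  have hsab : Real.sqrt (a^2 + b^2) = s := rfl
  rw [hsab]
  rw [show (0:ℝ)^3/3 * Real.log 0 = 0 by norm_num]
  rw [show w = 2*a by rw [hadef]; ring, show h = 2*b by rw [hbdef]; ring]
  rw [show Real.log (a + s) = Real.log (s + a) by rw [add_comm]]
  rw [show Real.log (0 + b) = Real.log b by rw [zero_add]]
  ring
end

section
/- Let a, b > 0 and let T be the right triangle in the Euclidean plane with vertices B = (0,0), C = (a,0), and A = (a,b) (so the right angle is at C, side BC has length a, side CA has length b, and the hypotenuse AB has length c = √(a² + b²)). Then the Fermat–Weber value of T relative to the vertex B satisfies ∫_T ‖x‖ dx = (1/6)·a·b·c + (1/6)·a³·log((c + b)/a). -/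
open MeasureTheory Real intervalIntegral


lemma hasDeriv_prim (u : ℝ) :
    HasDerivAt (fun u : ℝ => (u * Real.sqrt (1 + u^2) + Real.arsinh u) / 2)
      (Real.sqrt (1 + u^2)) u := by
  have h1 : (0:ℝ) < 1 + u^2 := by positivity
  have hs : Real.sqrt (1 + u^2) ≠ 0 := by positivity
  have hsq : HasDerivAt (fun u : ℝ => Real.sqrt (1 + u^2)) (u / Real.sqrt (1 + u^2)) u := by
    have := (Real.hasDerivAt_sqrt h1.ne').comp u
      (((hasDerivAt_pow 2 u).const_add 1))
    refine this.congr_deriv ?_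
    field_simp
    ring
  have hmul : HasDerivAt (fun u : ℝ => u * Real.sqrt (1 + u^2))
      (Real.sqrt (1 + u^2) + u * (u / Real.sqrt (1 + u^2))) u := by
    exact ((hasDerivAt_id' u).mul hsq).congr_deriv (by ring)
  have := (hmul.add (Real.hasDerivAt_arsinh u)).div_const 2
  refine this.congr_deriv ?_
  have h2 : Real.sqrt (1 + u^2) * Real.sqrt (1 + u^2) = 1 + u^2 :=
    Real.mul_self_sqrt h1.le
  field_simp
  nlinarith [h2]

lemma L1 (m : ℝ) : ∫ u in (0:ℝ)..m, Real.sqrt (1 + u^2)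
    = (m * Real.sqrt (1 + m^2) + Real.arsinh m) / 2 := by
  have := intervalIntegral.integral_eq_sub_of_hasDerivAt
    (fun u _ => hasDeriv_prim u)
    ((continuous_const.add (continuous_pow 2)).sqrt.intervalIntegrable 0 m)
  simpa [Real.arsinh_zero] using this

lemma L2 (x m : ℝ) (hx : 0 < x) :
    ∫ y in (0:ℝ)..(m*x), Real.sqrt (x^2 + y^2)
      = x^2 * ∫ u in (0:ℝ)..m, Real.sqrt (1 + u^2) := by
  have h := intervalIntegral.integral_comp_mul_right (fun y => Real.sqrt (x^2 + y^2)) hx.ne' (a := 0) (b := m)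
  rw [zero_mul, smul_eq_mul] at h
  have h2 : ∫ y in (0:ℝ)..(m*x), Real.sqrt (x^2 + y^2)
      = x * ∫ u in (0:ℝ)..m, Real.sqrt (x^2 + (u*x)^2) := by
    rw [h]; field_simp
  have h3 : ∀ u ∈ Set.uIcc (0:ℝ) m,
      Real.sqrt (x^2 + (u*x)^2) = x * Real.sqrt (1 + u^2) := by
    intro u _
    have : x^2 + (u*x)^2 = x^2 * (1 + u^2) := by ring
    rw [this, Real.sqrt_mul (by positivity), Real.sqrt_sq hx.le]
  rw [h2, intervalIntegral.integral_congr h3, intervalIntegral.integral_const_mul]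
  ring
lemma L3 (a m : ℝ) (ha : 0 < a) (hm : 0 ≤ m) :
    ∫ p in {p : ℝ×ℝ | 0 ≤ p.1 ∧ p.1 ≤ a ∧ 0 ≤ p.2 ∧ p.2 ≤ m*p.1},
        Real.sqrt (p.1^2 + p.2^2)
      = ∫ x in Set.Icc (0:ℝ) a, ∫ y in (0:ℝ)..(m*x), Real.sqrt (x^2 + y^2) := by
  set g : ℝ × ℝ → ℝ := fun p => Real.sqrt (p.1^2 + p.2^2) with hg
  set S : Set (ℝ × ℝ) := {p | 0 ≤ p.1 ∧ p.1 ≤ a ∧ 0 ≤ p.2 ∧ p.2 ≤ m*p.1} with hS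
  have hScl : IsClosed S := by
    have : S = ({p : ℝ×ℝ | 0 ≤ p.1} ∩ {p | p.1 ≤ a}) ∩
        ({p : ℝ×ℝ | 0 ≤ p.2} ∩ {p | p.2 ≤ m*p.1}) := by
      ext p; simp only [hS, Set.mem_setOf_eq, Set.mem_inter_iff]; tauto
    rw [this]
    exact ((isClosed_le continuous_const continuous_fst).inter
      (isClosed_le continuous_fst continuous_const)).inter
      ((isClosed_le continuous_const continuous_snd).inter
        (isClosed_le continuous_snd (continuous_const.mul continuous_fst)))
  have hSm : MeasurableSet S := hScl.measurableSet
  have hSsub : S ⊆ Set.Icc ((0:ℝ),(0:ℝ)) (a, m*a) := by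
    rintro ⟨x, y⟩ ⟨hx0, hxa, hy0, hym⟩
    refine Set.mem_Icc.2 ⟨⟨hx0, hy0⟩, ⟨hxa, hym.trans (mul_le_mul_of_nonneg_left hxa hm)⟩⟩
  have hScomp : IsCompact S := isCompact_Icc.of_isClosed_subset hScl hSsub
  have hcont : Continuous g := by
    apply Continuous.sqrt; continuity
  have hint : IntegrableOn g S := hcont.continuousOn.integrableOn_compact hScomp
  rw [← MeasureTheory.integral_indicator hSm]
  rw [Measure.volume_eq_prod]
  rw [integral_prod _ ((integrable_indicator_iff hSm).2 (by
    rwa [Measure.volume_eq_prod] at hint))]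
  have key : ∀ x : ℝ, (∫ y, S.indicator g (x, y))
      = (Set.Icc (0:ℝ) a).indicator
          (fun x => ∫ y in (0:ℝ)..(m*x), Real.sqrt (x^2 + y^2)) x := by
    intro x
    by_cases hx : x ∈ Set.Icc (0:ℝ) a
    · rw [Set.indicator_of_mem hx]
      have hx' := Set.mem_Icc.1 hx
      have heq : (fun y => S.indicator g (x, y))
          = (Set.Icc 0 (m*x)).indicator (fun y => Real.sqrt (x^2 + y^2)) := by
        funext y
        by_cases hy : y ∈ Set.Icc 0 (m*x)
        · have hy' := Set.mem_Icc.1 hy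
          rw [Set.indicator_of_mem hy, Set.indicator_of_mem]
          exact ⟨hx'.1, hx'.2, hy'.1, hy'.2⟩
        · rw [Set.indicator_of_notMem hy, Set.indicator_of_notMem]
          intro hmem
          exact hy (Set.mem_Icc.2 ⟨hmem.2.2.1, hmem.2.2.2⟩)
      rw [heq, MeasureTheory.integral_indicator measurableSet_Icc,
        integral_Icc_eq_integral_Ioc,
        ← intervalIntegral.integral_of_le (mul_nonneg hm hx'.1)]
    · rw [Set.indicator_of_notMem hx]
      have : ∀ y, S.indicator g (x, y) = 0 := by
        intro y
        apply Set.indicator_of_notMem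
        rw [Set.mem_Icc] at hx
        intro hmem
        exact hx ⟨hmem.1, hmem.2.1⟩
      simp [this]
  change ∫ x, ∫ y, S.indicator g (x, y) = _
  simp_rw [key]
  rw [MeasureTheory.integral_indicator measurableSet_Icc]

lemma hull_eq (a b : ℝ) (ha : 0 < a) (hb : 0 < b)
    (Cpt Apt : EuclideanSpace ℝ (Fin 2))
    (hC0 : Cpt 0 = a) (hC1 : Cpt 1 = 0) (hA0 : Apt 0 = a) (hA1 : Apt 1 = b) :
    convexHull ℝ {(0 : EuclideanSpace ℝ (Fin 2)), Cpt, Apt}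
      = {x : EuclideanSpace ℝ (Fin 2) | 0 ≤ x 0 ∧ x 0 ≤ a ∧ 0 ≤ x 1 ∧ a * x 1 ≤ b * x 0} := by
  apply Set.Subset.antisymm
  · apply convexHull_min
    · rintro x (rfl | rfl | rfl)
      · refine ⟨le_refl _, ha.le, le_refl _, by simp⟩
      · exact ⟨by rw [hC0]; exact ha.le, by rw [hC0], by rw [hC1], by rw [hC0, hC1]; nlinarith⟩
      · exact ⟨by rw [hA0]; exact ha.le, by rw [hA0], by rw [hA1]; exact hb.le,
          by rw [hA0, hA1]; nlinarith⟩
    · intro x hx y hy α β hα hβ hαβ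
      have e0 : (α • x + β • y) 0 = α * x 0 + β * y 0 := rfl
      have e1 : (α • x + β • y) 1 = α * x 1 + β * y 1 := rfl
      obtain ⟨hx0, hxa, hx1, hxl⟩ := hx
      obtain ⟨hy0, hya, hy1, hyl⟩ := hy
      refine ⟨?_, ?_, ?_, ?_⟩
      · rw [e0]; positivity
      · rw [e0]; nlinarith
      · rw [e1]; positivity
      · rw [e0, e1]; nlinarith
  · rintro z ⟨hz0, hza, hz1, hzl⟩
    by_cases hz : z 0 = 0
    · have hz1' : z 1 = 0 := by
        rw [hz] at hzl; nlinarith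
      have : z = 0 := by
        ext i
        fin_cases i
        · exact hz
        · exact hz1'
      rw [this]
      exact subset_convexHull ℝ _ (Set.mem_insert _ _)
    · have hz0' : 0 < z 0 := lt_of_le_of_ne hz0 (Ne.symm hz)
      set t : ℝ := a * z 1 / (b * z 0) with ht
      have hbz : 0 < b * z 0 := by positivity
      have ht0 : 0 ≤ t := by positivity
      have ht1 : t ≤ 1 := by
        rw [ht, div_le_one hbz]; exact hzl
      set w : EuclideanSpace ℝ (Fin 2) := (1 - t) • Cpt + t • Apt with hw
      have hwmem : w ∈ convexHull ℝ {(0 : EuclideanSpace ℝ (Fin 2)), Cpt, Apt} := by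
        apply (convex_convexHull ℝ _)
          (subset_convexHull ℝ _ (by simp : Cpt ∈ _))
          (subset_convexHull ℝ _ (by simp : Apt ∈ _))
          (by linarith) ht0 (by ring)
      have hzw : z = (1 - z 0 / a) • (0 : EuclideanSpace ℝ (Fin 2)) + (z 0 / a) • w := by
        ext i
        have hw0 : w 0 = a := by
          show (1 - t) * Cpt 0 + t * Apt 0 = a
          rw [hC0, hA0]; ring
        have hw1 : w 1 = t * b := by
          show (1 - t) * Cpt 1 + t * Apt 1 = t * b
          rw [hC1, hA1]; ring
        fin_cases i
        · show z 0 = (1 - z 0 / a) * 0 + (z 0 / a) * w 0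
          rw [hw0]; field_simp; ring
        · show z 1 = (1 - z 0 / a) * 0 + (z 0 / a) * w 1
          rw [hw1, ht]; field_simp; ring
      rw [hzw]
      exact (convex_convexHull ℝ _)
        (subset_convexHull ℝ _ (Set.mem_insert _ _)) hwmem
        (by rw [sub_nonneg, div_le_one ha]; exact hza) (by positivity) (by ring)

noncomputable def ψ : EuclideanSpace ℝ (Fin 2) ≃ᵐ ℝ × ℝ :=
  (MeasurableEquiv.toLp 2 (Fin 2 → ℝ)).symm.trans MeasurableEquiv.finTwoArrow

theorem fermat_weber_right_triangle (a b : ℝ) (ha : 0 < a) (hb : 0 < b)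
    (Cpt Apt : EuclideanSpace ℝ (Fin 2))
    (hC0 : Cpt 0 = a) (hC1 : Cpt 1 = 0) (hA0 : Apt 0 = a) (hA1 : Apt 1 = b)
    (c : ℝ) (hc : c = Real.sqrt (a ^ 2 + b ^ 2)) :
    ∫ x in convexHull ℝ {(0 : EuclideanSpace ℝ (Fin 2)), Cpt, Apt}, ‖x‖ ∂volume
      = 1 / 6 * a * b * c + 1 / 6 * a ^ 3 * Real.log ((c + b) / a) := by
  rw [hull_eq a b ha hb Cpt Apt hC0 hC1 hA0 hA1]
  have hmp : MeasurePreserving ψ.symm (volume.prod volume)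
      (volume : Measure (EuclideanSpace ℝ (Fin 2))) := by
    have h1 : MeasurePreserving ψ volume volume := by
      rw [Measure.volume_eq_prod]
      exact (measurePreserving_finTwoArrow volume).comp
        (EuclideanSpace.volume_preserving_symm_measurableEquiv_toLp (Fin 2))
    have := h1.symm ψ
    rwa [Measure.volume_eq_prod] at this
  rw [← hmp.setIntegral_preimage_emb (MeasurableEquiv.measurableEmbedding ψ.symm)]
  have hpre : ψ.symm ⁻¹' {x : EuclideanSpace ℝ (Fin 2) |
        0 ≤ x 0 ∧ x 0 ≤ a ∧ 0 ≤ x 1 ∧ a * x 1 ≤ b * x 0}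
      = {p : ℝ × ℝ | 0 ≤ p.1 ∧ p.1 ≤ a ∧ 0 ≤ p.2 ∧ p.2 ≤ (b/a) * p.1} := by
    ext p
    have e0 : (ψ.symm p) 0 = p.1 := rfl
    have e1 : (ψ.symm p) 1 = p.2 := rfl
    simp only [Set.mem_preimage, Set.mem_setOf_eq, e0, e1]
    have : (a * p.2 ≤ b * p.1) ↔ (p.2 ≤ b / a * p.1) := by
      rw [div_mul_eq_mul_div, le_div_iff₀ ha]
      constructor <;> intro <;> linarith
    tauto
  rw [hpre]
  have hnorm : (fun p : ℝ × ℝ => ‖(ψ.symm p : EuclideanSpace ℝ (Fin 2))‖)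
      = fun p => Real.sqrt (p.1^2 + p.2^2) := by
    funext p
    rw [EuclideanSpace.norm_eq]
    simp [Fin.sum_univ_two, sq_abs]
    rfl
  rw [hnorm, ← Measure.volume_eq_prod, L3 a (b/a) ha (div_nonneg hb.le ha.le)]
  set K : ℝ := ((b/a) * Real.sqrt (1 + (b/a)^2) + Real.arsinh (b/a)) / 2 with hK
  have hinner : ∀ x ∈ Set.Icc (0:ℝ) a,
      (∫ y in (0:ℝ)..((b/a)*x), Real.sqrt (x^2 + y^2)) = K * x^2 := by
    intro x hx
    rcases eq_or_lt_of_le hx.1 with h0 | h0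
    · rw [← h0]
      simp
    · rw [L2 x (b/a) h0, L1]
      rw [hK]; ring
  rw [setIntegral_congr_fun measurableSet_Icc hinner]
  rw [integral_Icc_eq_integral_Ioc, ← intervalIntegral.integral_of_le ha.le,
    intervalIntegral.integral_const_mul, integral_pow]
  have hc0 : 0 < c := by rw [hc]; positivity
  have hsq : Real.sqrt (1 + (b/a)^2) = c / a := by
    have h1 : 1 + (b/a)^2 = (a^2 + b^2) / a^2 := by field_simp
    rw [h1, Real.sqrt_div (by positivity), ← hc, Real.sqrt_sq ha.le]
  have hars : Real.arsinh (b/a) = Real.log ((c + b) / a) := by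
    rw [Real.arsinh, hsq]
    congr 1
    field_simp
    ring
  rw [hK, hsq, hars]
  field_simp
  ring
end

section
/- Let w ∈ ℝ with w ≥ 1 and let k ≥ 1 be an integer. Define p₀ = ⌊√(w·k)⌋ and q₀ = ⌊√(k/w)⌋ (integer parts of real numbers). Then the integer q = ⌊k/(p₀ + 1)⌋ satisfies q₀ − 1 ≤ q ≤ q₀. -/
open Real

theorem subdivision_q_range (w : ℝ) (hw : 1 ≤ w) (k : ℕ) (hk : 1 ≤ k)
    (p₀ q₀ q : ℕ)
    (hp₀ : p₀ = ⌊Real.sqrt (w * k)⌋₊)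
    (hq₀ : q₀ = ⌊Real.sqrt (k / w)⌋₊)
    (hq : q = k / (p₀ + 1)) :
    q₀ - 1 ≤ q ∧ q ≤ q₀ := by
  subst hp₀ hq₀ hq
  have hw0 : (0:ℝ) < w := lt_of_lt_of_le one_pos hw
  have hk0 : (0:ℝ) ≤ (k:ℝ) := Nat.cast_nonneg k
  set a := Real.sqrt (w * k) with ha
  set b := Real.sqrt (k / w) with hb
  have hab : a * b = k := by
    rw [ha, hb, ← Real.sqrt_mul (by positivity),
      show w * (k:ℝ) * ((k:ℝ) / w) = (k:ℝ)^2 by field_simp]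
    exact Real.sqrt_sq hk0
  have ha0 : 0 ≤ a := Real.sqrt_nonneg _
  have hb0 : 0 ≤ b := Real.sqrt_nonneg _
  have hba : b ≤ a := by
    apply Real.sqrt_le_sqrt
    rw [div_le_iff₀ hw0]
    nlinarith [mul_nonneg (mul_nonneg (sub_nonneg.2 hw) (by linarith : (0:ℝ) ≤ w + 1)) hk0]
  have hfa : (⌊a⌋₊ : ℝ) ≤ a := Nat.floor_le ha0
  have hfa' : a < ⌊a⌋₊ + 1 := Nat.lt_floor_add_one a
  have hfb : (⌊b⌋₊ : ℝ) ≤ b := Nat.floor_le hb0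
  have hfb' : b < ⌊b⌋₊ + 1 := Nat.lt_floor_add_one b
  constructor
  · rw [Nat.le_div_iff_mul_le (Nat.succ_pos _)]
    rcases Nat.eq_zero_or_pos ⌊b⌋₊ with h | h
    · simp [h]
    · rw [← Nat.cast_le (α := ℝ)]
      push_cast [h]
      nlinarith
  · have : k / (⌊a⌋₊ + 1) < ⌊b⌋₊ + 1 := by
      rw [Nat.div_lt_iff_lt_mul (Nat.succ_pos _), ← Nat.cast_lt (α := ℝ)]
      push_cast
      nlinarith
    omega
end

section
/- Let w ∈ ℝ with w ≥ 1 and let k ≥ 1 be an integer. Define p₀ = ⌊√(w·k)⌋ ≥ 1 and q₀ = ⌊√(k/w)⌋ (integer parts of real numbers). Then ⌊k/p₀⌋ = q₀ or ⌊k/(p₀ + 1)⌋ = q₀; that is, at least one of the choices p = p₀ or p = p₀ + 1 yields q = ⌊k/p⌋ equal to q₀. -/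
open Real

theorem subdivision_some_config_hits_q₀ (w : ℝ) (hw : 1 ≤ w) (k : ℕ) (hk : 1 ≤ k)
    (p₀ q₀ : ℕ)
    (hp₀ : p₀ = ⌊Real.sqrt (w * k)⌋₊) (hp₀pos : 1 ≤ p₀)
    (hq₀ : q₀ = ⌊Real.sqrt (k / w)⌋₊) :
    k / p₀ = q₀ ∨ k / (p₀ + 1) = q₀ := by
  have hw0 : (0:ℝ) < w := lt_of_lt_of_le one_pos hw
  have hk0 : (0:ℝ) < k := by exact_mod_cast hk
  have hprod : Real.sqrt (w * k) * Real.sqrt ((k:ℝ) / w) = k := by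
    rw [← Real.sqrt_mul (by positivity)]
    have h : w * k * ((k:ℝ) / w) = (k:ℝ) ^ 2 := by field_simp
    rw [h, Real.sqrt_sq (by positivity)]
  have hp_le : (p₀:ℝ) ≤ Real.sqrt (w * k) := by
    rw [hp₀]; exact Nat.floor_le (Real.sqrt_nonneg _)
  have hq_le : (q₀:ℝ) ≤ Real.sqrt ((k:ℝ) / w) := by
    rw [hq₀]; exact Nat.floor_le (Real.sqrt_nonneg _)
  have hp_lt : Real.sqrt (w * k) < p₀ + 1 := by
    rw [hp₀]; exact Nat.lt_floor_add_one _
  have hq_lt : Real.sqrt ((k:ℝ) / w) < q₀ + 1 := by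
    rw [hq₀]; exact Nat.lt_floor_add_one _
  have h1 : p₀ * q₀ ≤ k := by
    have : (p₀:ℝ) * q₀ ≤ k := by
      calc (p₀:ℝ) * q₀ ≤ Real.sqrt (w * k) * Real.sqrt ((k:ℝ) / w) :=
            mul_le_mul hp_le hq_le (by positivity) (Real.sqrt_nonneg _)
        _ = k := hprod
    exact_mod_cast this
  have h2 : k < (p₀ + 1) * (q₀ + 1) := by
    have : (k:ℝ) < ((p₀:ℝ) + 1) * ((q₀:ℝ) + 1) := by
      calc (k:ℝ) = Real.sqrt (w * k) * Real.sqrt ((k:ℝ) / w) := hprod.symm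
        _ < ((p₀:ℝ) + 1) * ((q₀:ℝ) + 1) :=
            mul_lt_mul'' hp_lt hq_lt (Real.sqrt_nonneg _) (Real.sqrt_nonneg _)
    exact_mod_cast this
  have h3 : q₀ ≤ p₀ := by
    rw [hp₀, hq₀]
    apply Nat.floor_le_floor
    apply Real.sqrt_le_sqrt
    calc (k:ℝ) / w ≤ k := div_le_self (by positivity) hw
      _ ≤ w * k := le_mul_of_one_le_left (by positivity) hw
  have hd2 : k / (p₀ + 1) < q₀ + 1 := by
    rw [Nat.div_lt_iff_lt_mul (Nat.succ_pos _)]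
    calc k < (p₀ + 1) * (q₀ + 1) := h2
      _ = (q₀ + 1) * (p₀ + 1) := mul_comm _ _
  rcases Nat.lt_or_ge (k / (p₀ + 1)) q₀ with h | h
  · left
    have hlt : k < q₀ * (p₀ + 1) := (Nat.div_lt_iff_lt_mul (Nat.succ_pos _)).mp h
    have hub : k / p₀ < q₀ + 1 := by
      rw [Nat.div_lt_iff_lt_mul hp₀pos]
      nlinarith
    have hlb : q₀ ≤ k / p₀ := by
      rw [Nat.le_div_iff_mul_le hp₀pos]
      nlinarith
    omega
  · right; omega
end

section
/- Let C be a nonempty compact convex subset of the Euclidean plane ℝ², and suppose there are points a, b ∈ C with a₂ = b₂ (the segment ab is horizontal) such that ‖a − b‖ = diam(C), i.e., ‖x − y‖ ≤ ‖a − b‖ for all x, y ∈ C. Let w = sup{x₁ : x ∈ C} − inf{x₁ : x ∈ C} and h = sup{x₂ : x ∈ C} − inf{x₂ : x ∈ C} be the dimensions of the axis-aligned bounding box of C. Then w·h/2 ≤ Area(C) ≤ w·h, where Area denotes the Lebesgue measure. -/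
open MeasureTheory Real Set

lemma lin_int_up (l u d : ℝ) (hlu : l ≤ u) :
    ∫ y in Set.Ioo l u, (d - (y - l) * (d / (u - l))) = d * (u - l) / 2 := by
  rcases eq_or_lt_of_le hlu with rfl | hlt
  · simp
  · have hc : (0:ℝ) < u - l := by linarith
    rw [← integral_Ioc_eq_integral_Ioo, ← intervalIntegral.integral_of_le hlu]
    have h1 : ∫ y in l..u, (d - (y - l) * (d / (u - l)))
        = (∫ y in l..u, (d:ℝ)) - (∫ y in l..u, (y - l)) * (d / (u - l)) := by
      rw [← intervalIntegral.integral_mul_const, ← intervalIntegral.integral_sub]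
      · exact intervalIntegrable_const
      · exact ((continuous_id.sub continuous_const).mul continuous_const).intervalIntegrable _ _
    have h2 : ∫ y in l..u, (y - l) = (u - l) ^ 2 / 2 := by
      rw [intervalIntegral.integral_comp_sub_right (fun y => y) l]
      simp [integral_id]
    rw [h1, h2, intervalIntegral.integral_const]
    field_simp
    ring

lemma lin_int_down (l u d : ℝ) (hlu : l ≤ u) :
    ∫ y in Set.Ioo l u, (d - (y - u) * (d / (l - u))) = d * (u - l) / 2 := by
  have key : ∀ y : ℝ, (d - (y - u) * (d / (l - u)))
      = (fun z => d - (z - l) * (d / (u - l))) (l + u - y) := by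
    intro y
    simp only
    rcases eq_or_ne (u - l) 0 with h0 | h0
    · have : l - u = 0 := by linarith
      simp [this, h0]
    · have h1 : l - u ≠ 0 := by intro h; apply h0; linarith
      field_simp
      ring
  calc ∫ y in Set.Ioo l u, (d - (y - u) * (d / (l - u)))
      = ∫ y in Set.Ioo l u, (fun z => d - (z - l) * (d / (u - l))) (l + u - y) := by
        simp_rw [key]
    _ = d * (u - l) / 2 := by
        rw [← integral_Ioc_eq_integral_Ioo, ← intervalIntegral.integral_of_le hlu,
          intervalIntegral.integral_comp_sub_left (fun z => d - (z - l) * (d / (u - l))) (l + u)]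
        have e1 : l + u - u = l := by ring
        have e2 : l + u - l = u := by ring
        rw [e1, e2, intervalIntegral.integral_of_le hlu, integral_Ioc_eq_integral_Ioo,
          lin_int_up l u d hlu]

lemma pair_comb (c1 c2 p1 p2 q1 q2 : ℝ) :
    (c1 • ((p1, p2) : ℝ × ℝ) + c2 • (q1, q2)) = (c1 * p1 + c2 * q1, c1 * p2 + c2 * q2) := by
  simp [Prod.ext_iff]

lemma mem_of_between {T : Set (ℝ × ℝ)} (hTconv : Convex ℝ T)
    {yb yt A0 B0 P0 : ℝ}
    (hA : (yb, A0) ∈ T) (hB : (yb, B0) ∈ T) (hP : (yt, P0) ∈ T)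
    {y x t : ℝ} (ht0 : 0 ≤ t) (ht1 : t ≤ 1)
    (hty : yb + t * (yt - yb) = y)
    (hx1 : A0 + t * (P0 - A0) ≤ x) (hx2 : x ≤ B0 + t * (P0 - B0)) :
    (y, x) ∈ T := by
  set u := A0 + t * (P0 - A0) with hu
  set v := B0 + t * (P0 - B0) with hv
  have hA' : (y, u) ∈ T := by
    have hmem := hTconv hA hP (by linarith : (0:ℝ) ≤ 1 - t) ht0 (by ring)
    rw [pair_comb] at hmem
    have h1 : (1 - t) * yb + t * yt = y := by linarith [hty] ; 
    have h2 : (1 - t) * A0 + t * P0 = u := by rw [hu]; ring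
    rwa [h1, h2] at hmem
  have hB' : (y, v) ∈ T := by
    have hmem := hTconv hB hP (by linarith : (0:ℝ) ≤ 1 - t) ht0 (by ring)
    rw [pair_comb] at hmem
    have h1 : (1 - t) * yb + t * yt = y := by linarith [hty]
    have h2 : (1 - t) * B0 + t * P0 = v := by rw [hv]; ring
    rwa [h1, h2] at hmem
  rcases eq_or_lt_of_le (le_trans hx1 hx2 : u ≤ v) with heq | hlt
  · have : x = u := le_antisymm (heq ▸ hx2) hx1
    rwa [this]
  · set s := (x - u) / (v - u) with hs
    have hvu : v - u ≠ 0 := by linarith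
    have hs0 : 0 ≤ s := div_nonneg (by linarith) (by linarith)
    have hs1 : s ≤ 1 := (div_le_one (by linarith)).mpr (by linarith)
    have hmem := hTconv hA' hB' (by linarith : (0:ℝ) ≤ 1 - s) hs0 (by ring)
    rw [pair_comb] at hmem
    have h1 : (1 - s) * y + s * y = y := by ring
    have h2 : (1 - s) * u + s * v = x := by
      have : s * (v - u) = x - u := div_mul_cancel₀ _ hvu
      linarith [this]
    rwa [h1, h2] at hmem

lemma tri_up {T : Set (ℝ × ℝ)} (hTconv : Convex ℝ T)
    {yb yt A0 B0 P0 : ℝ} (hy : yb ≤ yt) (hAB : A0 ≤ B0)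
    (hA : (yb, A0) ∈ T) (hB : (yb, B0) ∈ T) (hP : (yt, P0) ∈ T) :
    ∃ R : Set (ℝ × ℝ), R ⊆ T ∧ MeasurableSet R ∧ (∀ p ∈ R, p.1 ∈ Set.Ioo yb yt) ∧
      volume R = ENNReal.ofReal ((B0 - A0) * (yt - yb) / 2) := by
  set f : ℝ → ℝ := fun y => A0 + (y - yb) * ((P0 - A0) / (yt - yb)) with hf
  set g : ℝ → ℝ := fun y => B0 + (y - yb) * ((P0 - B0) / (yt - yb)) with hg
  have hfc : Continuous f := by fun_prop
  have hgc : Continuous g := by fun_prop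
  refine ⟨regionBetween f g (Set.Ioo yb yt), ?_, ?_, ?_, ?_⟩
  · rintro ⟨y, x⟩ ⟨hy1, hx⟩
    simp only [Set.mem_Ioo] at hy1 hx
    obtain ⟨hyl, hyu⟩ := hy1
    have hc : (0:ℝ) < yt - yb := by linarith
    set t := (y - yb) / (yt - yb) with ht
    have ht0 : 0 ≤ t := div_nonneg (by linarith) hc.le
    have ht1 : t ≤ 1 := (div_le_one hc).mpr (by linarith)
    refine mem_of_between hTconv hA hB hP ht0 ht1 ?_ ?_ ?_
    · rw [ht]; field_simp; ring
    · have : A0 + t * (P0 - A0) = f y := by rw [ht, hf]; ring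
      rw [this]; exact hx.1.le
    · have : B0 + t * (P0 - B0) = g y := by rw [ht, hg]; ring
      rw [this]; exact hx.2.le
  · exact measurableSet_regionBetween hfc.measurable hgc.measurable measurableSet_Ioo
  · rintro ⟨y, x⟩ ⟨hy1, _⟩; exact hy1
  · rw [Measure.volume_eq_prod, volume_regionBetween_eq_integral]
    · have hfun : ∀ y ∈ Set.Ioo yb yt, (g - f) y
          = (B0 - A0) - (y - yb) * ((B0 - A0) / (yt - yb)) := by
        intro y _
        simp only [Pi.sub_apply, hf, hg]
        ring
      rw [MeasureTheory.setIntegral_congr_fun measurableSet_Ioo hfun,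
        lin_int_up yb yt (B0 - A0) hy]
    · exact (hfc.integrableOn_Icc).mono_set Set.Ioo_subset_Icc_self
    · exact (hgc.integrableOn_Icc).mono_set Set.Ioo_subset_Icc_self
    · exact measurableSet_Ioo
    · intro y hy1
      have hc : (0:ℝ) < yt - yb := by
        simp only [Set.mem_Ioo] at hy1; linarith [hy1.1, hy1.2]
      simp only [Set.mem_Ioo] at hy1
      have h1 : (y - yb) * ((B0 - A0) / (yt - yb)) ≤ B0 - A0 := by
        rw [mul_div_assoc', div_le_iff₀ hc]
        nlinarith [hy1.1, hy1.2]
      simp only [hf, hg]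
      have he : B0 + (y - yb) * ((P0 - B0) / (yt - yb))
          - (A0 + (y - yb) * ((P0 - A0) / (yt - yb)))
          = (B0 - A0) - (y - yb) * ((B0 - A0) / (yt - yb)) := by ring
      linarith [h1, he]

lemma tri_down {T : Set (ℝ × ℝ)} (hTconv : Convex ℝ T)
    {yb yt A0 B0 P0 : ℝ} (hy : yt ≤ yb) (hAB : A0 ≤ B0)
    (hA : (yb, A0) ∈ T) (hB : (yb, B0) ∈ T) (hP : (yt, P0) ∈ T) :
    ∃ R : Set (ℝ × ℝ), R ⊆ T ∧ MeasurableSet R ∧ (∀ p ∈ R, p.1 ∈ Set.Ioo yt yb) ∧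
      volume R = ENNReal.ofReal ((B0 - A0) * (yb - yt) / 2) := by
  set f : ℝ → ℝ := fun y => A0 + (y - yb) * ((P0 - A0) / (yt - yb)) with hf
  set g : ℝ → ℝ := fun y => B0 + (y - yb) * ((P0 - B0) / (yt - yb)) with hg
  have hfc : Continuous f := by fun_prop
  have hgc : Continuous g := by fun_prop
  refine ⟨regionBetween f g (Set.Ioo yt yb), ?_, ?_, ?_, ?_⟩
  · rintro ⟨y, x⟩ ⟨hy1, hx⟩
    simp only [Set.mem_Ioo] at hy1 hx
    obtain ⟨hyl, hyu⟩ := hy1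
    have hc : yt - yb < 0 := by linarith
    have hne : yt - yb ≠ 0 := by linarith
    set t := (y - yb) / (yt - yb) with ht
    have key : t = (yb - y) / (yb - yt) := by
      rw [ht, show y - yb = -(yb - y) by ring, show yt - yb = -(yb - yt) by ring,
        neg_div_neg_eq]
    have ht0 : 0 ≤ t := by
      rw [key]; exact div_nonneg (by linarith) (by linarith)
    have ht1 : t ≤ 1 := by
      rw [key]; exact (div_le_one (by linarith)).mpr (by linarith)
    refine mem_of_between hTconv hA hB hP ht0 ht1 ?_ ?_ ?_
    · rw [ht]; field_simp; ring
    · have : A0 + t * (P0 - A0) = f y := by rw [ht, hf]; ring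
      rw [this]; exact hx.1.le
    · have : B0 + t * (P0 - B0) = g y := by rw [ht, hg]; ring
      rw [this]; exact hx.2.le
  · exact measurableSet_regionBetween hfc.measurable hgc.measurable measurableSet_Ioo
  · rintro ⟨y, x⟩ ⟨hy1, _⟩; exact hy1
  · rw [Measure.volume_eq_prod, volume_regionBetween_eq_integral]
    · have hfun : ∀ y ∈ Set.Ioo yt yb, (g - f) y
          = (B0 - A0) - (y - yb) * ((B0 - A0) / (yt - yb)) := by
        intro y _
        simp only [Pi.sub_apply, hf, hg]
        ring
      rw [MeasureTheory.setIntegral_congr_fun measurableSet_Ioo hfun,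
        lin_int_down yt yb (B0 - A0) hy]
    · exact (hfc.integrableOn_Icc).mono_set Set.Ioo_subset_Icc_self
    · exact (hgc.integrableOn_Icc).mono_set Set.Ioo_subset_Icc_self
    · exact measurableSet_Ioo
    · intro y hy1
      simp only [Set.mem_Ioo] at hy1
      have hc : (0:ℝ) < yb - yt := by linarith [hy1.1, hy1.2]
      have h1 : (y - yb) * ((B0 - A0) / (yt - yb)) ≤ B0 - A0 := by
        have heq : (y - yb) * ((B0 - A0) / (yt - yb))
            = (yb - y) * ((B0 - A0) / (yb - yt)) := by
          rw [show yb - yt = -(yt - yb) by ring, div_neg]; ring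
        rw [heq, mul_div_assoc', div_le_iff₀ hc]
        nlinarith [hy1.1, hy1.2]
      simp only [hf, hg]
      have he : B0 + (y - yb) * ((P0 - B0) / (yt - yb))
          - (A0 + (y - yb) * ((P0 - A0) / (yt - yb)))
          = (B0 - A0) - (y - yb) * ((B0 - A0) / (yt - yb)) := by ring
      linarith [h1, he]

lemma coord_abs_le_norm (v : EuclideanSpace ℝ (Fin 2)) (i : Fin 2) : |v i| ≤ ‖v‖ := by
  rw [EuclideanSpace.norm_eq, Fin.sum_univ_two, ← Real.sqrt_sq_eq_abs]
  apply Real.sqrt_le_sqrt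
  fin_cases i <;> simp [sq_abs] <;> positivity

noncomputable def psiL : EuclideanSpace ℝ (Fin 2) →ₗ[ℝ] ℝ × ℝ where
  toFun x := (x 1, x 0)
  map_add' x y := by simp [Prod.ext_iff]
  map_smul' c x := by simp [Prod.ext_iff]

lemma psiL_eq : ⇑psiL = ⇑((MeasurableEquiv.toLp 2 (Fin 2 → ℝ)).symm.trans
    (MeasurableEquiv.finTwoArrow.trans MeasurableEquiv.prodComm)) := by
  funext x; rfl

lemma psiL_mp : MeasurePreserving (⇑psiL) volume volume := by
  rw [psiL_eq]
  have h3 : MeasurePreserving (⇑(MeasurableEquiv.prodComm : ℝ × ℝ ≃ᵐ ℝ × ℝ)) volume volume := by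
    have : MeasurePreserving (Prod.swap : ℝ × ℝ → ℝ × ℝ)
        ((volume : Measure ℝ).prod volume) ((volume : Measure ℝ).prod volume) :=
      Measure.measurePreserving_swap
    rw [← Measure.volume_eq_prod] at this
    exact this
  exact (h3.comp (volume_preserving_finTwoArrow ℝ)).comp
    (EuclideanSpace.volume_preserving_symm_measurableEquiv_toLp (Fin 2))


lemma bounding_box_aux (C : Set (EuclideanSpace ℝ (Fin 2)))
    (hne : C.Nonempty) (hcomp : IsCompact C) (hconv : Convex ℝ C)
    (a b : EuclideanSpace ℝ (Fin 2)) (ha : a ∈ C) (hb : b ∈ C)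
    (hhoriz : a 1 = b 1) (hab : a 0 ≤ b 0)
    (hdiam : ∀ x ∈ C, ∀ y ∈ C, ‖x - y‖ ≤ ‖a - b‖)
    (w h : ℝ)
    (hw : w = sSup ((fun x : EuclideanSpace ℝ (Fin 2) => x 0) '' C)
            - sInf ((fun x : EuclideanSpace ℝ (Fin 2) => x 0) '' C))
    (hh : h = sSup ((fun x : EuclideanSpace ℝ (Fin 2) => x 1) '' C)
            - sInf ((fun x : EuclideanSpace ℝ (Fin 2) => x 1) '' C)) :
    w * h / 2 ≤ (volume C).toReal ∧ (volume C).toReal ≤ w * h := by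
  have hc0 : Continuous (fun x : EuclideanSpace ℝ (Fin 2) => x 0) := (continuous_apply 0).comp (PiLp.continuous_ofLp (p := 2) (β := fun _ : Fin 2 => ℝ))
  have hc1 : Continuous (fun x : EuclideanSpace ℝ (Fin 2) => x 1) := (continuous_apply 1).comp (PiLp.continuous_ofLp (p := 2) (β := fun _ : Fin 2 => ℝ))
  set K0 := (fun x : EuclideanSpace ℝ (Fin 2) => x 0) '' C with hK0
  set K1 := (fun x : EuclideanSpace ℝ (Fin 2) => x 1) '' C with hK1
  have hK0c : IsCompact K0 := hcomp.image hc0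
  have hK1c : IsCompact K1 := hcomp.image hc1
  have hK0ne : K0.Nonempty := hne.image _
  have hK1ne : K1.Nonempty := hne.image _
  obtain ⟨pS, hpS, hpS0⟩ := hK0c.sSup_mem hK0ne
  obtain ⟨m, hm, hm0⟩ := hK0c.sInf_mem hK0ne
  obtain ⟨p, hp, hp1⟩ := hK1c.sSup_mem hK1ne
  obtain ⟨q, hq, hq1⟩ := hK1c.sInf_mem hK1ne
  have hub0 : ∀ x ∈ C, x 0 ≤ sSup K0 := fun x hx => le_csSup hK0c.bddAbove ⟨x, hx, rfl⟩
  have hlb0 : ∀ x ∈ C, sInf K0 ≤ x 0 := fun x hx => csInf_le hK0c.bddBelow ⟨x, hx, rfl⟩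
  have hub1 : ∀ x ∈ C, x 1 ≤ sSup K1 := fun x hx => le_csSup hK1c.bddAbove ⟨x, hx, rfl⟩
  have hlb1 : ∀ x ∈ C, sInf K1 ≤ x 1 := fun x hx => csInf_le hK1c.bddBelow ⟨x, hx, rfl⟩
  set d := b 0 - a 0 with hd
  have hd0 : 0 ≤ d := by simp only [hd]; linarith
  have hnorm : ‖a - b‖ = d := by
    rw [EuclideanSpace.norm_eq, Fin.sum_univ_two]
    have h1 : (a - b) 1 = 0 := by simp [hhoriz]
    have h0 : (a - b) 0 = a 0 - b 0 := by simp
    rw [h0, h1]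
    rw [show ‖a 0 - b 0‖ = |a 0 - b 0| from rfl]
    simp only [norm_zero, ne_eq, OfNat.ofNat_ne_zero, not_false_eq_true, zero_pow, add_zero,
      sq_abs]
    rw [Real.sqrt_sq_eq_abs, abs_of_nonpos (by linarith)]
    simp only [hd]; ring
  have hDle : ∀ x ∈ C, ∀ y ∈ C, x 0 - y 0 ≤ d := by
    intro x hx y hy
    calc x 0 - y 0 ≤ |x 0 - y 0| := le_abs_self _
      _ = |(x - y) 0| := by norm_num
      _ ≤ ‖x - y‖ := coord_abs_le_norm _ _
      _ ≤ ‖a - b‖ := hdiam x hx y hy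
      _ = d := hnorm
  have hwd : w ≤ d := by
    rw [hw, ← hpS0, ← hm0]
    exact hDle pS hpS m hm
  have hw0 : 0 ≤ w := by
    have := hlb0 a ha; have := hub0 a ha; rw [hw]; linarith
  have hh0 : 0 ≤ h := by
    have := hlb1 a ha; have := hub1 a ha; rw [hh]; linarith
  set T := ⇑psiL '' C with hT
  have hTconv : Convex ℝ T := hconv.linear_image psiL
  have hmemT : ∀ x ∈ C, ((x 1 : ℝ), x 0) ∈ T := fun x hx => ⟨x, hx, rfl⟩
  have hCm : MeasurableSet C := hcomp.isClosed.measurableSet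
  have hvolT : volume T = volume C := by
    rw [hT, psiL_eq, MeasurableEquiv.image_eq_preimage_symm]
    have hmp := psiL_mp
    rw [psiL_eq] at hmp
    exact (hmp.symm _).measure_preimage hCm.nullMeasurableSet
  have hfin : volume C ≠ ⊤ := hcomp.measure_lt_top.ne
  have haS : a 1 ≤ sSup K1 := hub1 a ha
  have haI : sInf K1 ≤ a 1 := hlb1 a ha
  constructor
  · -- lower bound
    obtain ⟨R1, hR1T, hR1m, hR1s, hR1v⟩ := tri_up hTconv haS hab
      (hmemT a ha) (by rw [hhoriz]; exact hmemT b hb)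
      (by rw [← hp1]; exact hmemT p hp)
    obtain ⟨R2, hR2T, hR2m, hR2s, hR2v⟩ := tri_down hTconv haI hab
      (hmemT a ha) (by rw [hhoriz]; exact hmemT b hb)
      (by rw [← hq1]; exact hmemT q hq)
    have hdisj : Disjoint R1 R2 := by
      rw [Set.disjoint_left]
      intro pt h1 h2
      have := (hR1s pt h1).1
      have := (hR2s pt h2).2
      linarith
    have hunion : volume (R1 ∪ R2) = volume R1 + volume R2 :=
      measure_union hdisj hR2m
    have hle : volume (R1 ∪ R2) ≤ volume C := by
      rw [← hvolT]
      exact measure_mono (Set.union_subset hR1T hR2T)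
    have hsum : volume R1 + volume R2 = ENNReal.ofReal (d * h / 2) := by
      rw [hR1v, hR2v, ← ENNReal.ofReal_add
        (div_nonneg (mul_nonneg hd0 (by linarith)) two_pos.le)
        (div_nonneg (mul_nonneg hd0 (by linarith)) two_pos.le)]
      congr 1
      rw [hh]
      ring
    have hkey : ENNReal.ofReal (d * h / 2) ≤ volume C := by
      rw [← hsum, ← hunion]; exact hle
    have hfinal := (ENNReal.ofReal_le_iff_le_toReal hfin).mp hkey
    nlinarith [hfinal, hwd, hh0]
  · -- upper bound
    have hsub : T ⊆ Set.Icc (sInf K1) (sSup K1) ×ˢ Set.Icc (sInf K0) (sSup K0) := by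
      rintro pt ⟨c, hc, rfl⟩
      exact ⟨⟨hlb1 c hc, hub1 c hc⟩, hlb0 c hc, hub0 c hc⟩
    have hvb : volume (Set.Icc (sInf K1) (sSup K1) ×ˢ Set.Icc (sInf K0) (sSup K0))
        = ENNReal.ofReal (w * h) := by
      rw [Measure.volume_eq_prod, Measure.prod_prod, Real.volume_Icc, Real.volume_Icc,
        ← ENNReal.ofReal_mul (by linarith)]
      congr 1
      rw [hw, hh]; ring
    have hmono := measure_mono (μ := (volume : Measure (ℝ × ℝ))) hsub
    rw [hvb, hvolT] at hmono
    exact ENNReal.toReal_le_of_le_ofReal (mul_nonneg hw0 hh0) hmono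

theorem bounding_box_area_relation (C : Set (EuclideanSpace ℝ (Fin 2)))
    (hne : C.Nonempty) (hcomp : IsCompact C) (hconv : Convex ℝ C)
    (a b : EuclideanSpace ℝ (Fin 2)) (ha : a ∈ C) (hb : b ∈ C)
    (hhoriz : a 1 = b 1)
    (hdiam : ∀ x ∈ C, ∀ y ∈ C, ‖x - y‖ ≤ ‖a - b‖)
    (w h : ℝ)
    (hw : w = sSup ((fun x : EuclideanSpace ℝ (Fin 2) => x 0) '' C)
            - sInf ((fun x : EuclideanSpace ℝ (Fin 2) => x 0) '' C))
    (hh : h = sSup ((fun x : EuclideanSpace ℝ (Fin 2) => x 1) '' C)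
            - sInf ((fun x : EuclideanSpace ℝ (Fin 2) => x 1) '' C)) :
    w * h / 2 ≤ (volume C).toReal ∧ (volume C).toReal ≤ w * h := by
  rcases le_total (a 0) (b 0) with hab | hab
  · exact bounding_box_aux C hne hcomp hconv a b ha hb hhoriz hab hdiam w h hw hh
  · exact bounding_box_aux C hne hcomp hconv b a hb ha hhoriz.symm hab
      (fun x hx y hy => by rw [norm_sub_rev b a]; exact hdiam x hx y hy) w h hw hh
end

section
/- Let w ∈ ℝ with w ≥ 1 and let k ≥ 1 be an integer such that w/k ≤ 1/9. Define q₀ = ⌊√(k/w)⌋. Then q₀ ≥ 3, w·(q₀ + 1)²/k ≤ 16/9, and 1 ≤ k/(w·q₀²) < 16/9. Consequently, every sub-rectangle in the grid configuration with q = q₀ has aspect ratio at most 16/9. -/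
open Real

theorem case1_aspect_ratio (w : ℝ) (hw : 1 ≤ w) (k : ℕ) (hk : 1 ≤ k)
    (hwk : w / k ≤ 1 / 9) (q₀ : ℕ) (hq₀ : q₀ = ⌊Real.sqrt (k / w)⌋₊) :
    3 ≤ q₀ ∧ w * ((q₀ : ℝ) + 1) ^ 2 / k ≤ 16 / 9 ∧
      1 ≤ (k : ℝ) / (w * (q₀ : ℝ) ^ 2) ∧ (k : ℝ) / (w * (q₀ : ℝ) ^ 2) < 16 / 9 := by
  have hw0 : (0:ℝ) < w := lt_of_lt_of_le one_pos hw
  have hk0 : (0:ℝ) < (k:ℝ) := by exact_mod_cast hk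
  have hkw9 : (9:ℝ) ≤ (k:ℝ) / w := by
    rw [div_le_div_iff₀ hk0 (by norm_num)] at hwk
    rw [le_div_iff₀ hw0]; linarith
  have hkw0 : (0:ℝ) ≤ (k:ℝ) / w := by positivity
  set s := Real.sqrt ((k:ℝ)/w) with hs
  have hs3 : (3:ℝ) ≤ s := by
    have : Real.sqrt 9 ≤ s := Real.sqrt_le_sqrt hkw9
    rwa [show (9:ℝ) = 3^2 by norm_num, Real.sqrt_sq (by norm_num)] at this
  have hsq : s^2 = (k:ℝ)/w := Real.sq_sqrt hkw0
  have hq3 : 3 ≤ q₀ := by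
    rw [hq₀]
    exact Nat.le_floor (by exact_mod_cast hs3)
  have hqle : (q₀:ℝ) ≤ s := by rw [hq₀]; exact Nat.floor_le (Real.sqrt_nonneg _)
  have hlts : s < (q₀:ℝ) + 1 := by rw [hq₀]; exact Nat.lt_floor_add_one _
  have hq3' : (3:ℝ) ≤ (q₀:ℝ) := by exact_mod_cast hq3
  have hq0 : (0:ℝ) < (q₀:ℝ) := by linarith
  have key : (q₀:ℝ) + 1 ≤ (4/3) * s := by nlinarith
  refine ⟨hq3, ?_, ?_, ?_⟩
  · rw [div_le_iff₀ hk0]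
    have h1 : ((q₀:ℝ)+1)^2 ≤ (16/9) * s^2 := by nlinarith
    rw [hsq] at h1
    have : w * (((q₀:ℝ)+1)^2) ≤ w * ((16/9) * ((k:ℝ)/w)) :=
      mul_le_mul_of_nonneg_left h1 (le_of_lt hw0)
    calc w * ((q₀:ℝ)+1)^2 ≤ w * ((16/9) * ((k:ℝ)/w)) := this
      _ = 16/9 * (k:ℝ) := by field_simp
  · rw [le_div_iff₀ (by positivity)]
    have : (q₀:ℝ)^2 ≤ s^2 := by nlinarith
    rw [hsq] at this
    calc 1 * (w * (q₀:ℝ)^2) = w * (q₀:ℝ)^2 := by ring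
      _ ≤ w * ((k:ℝ)/w) := mul_le_mul_of_nonneg_left this (le_of_lt hw0)
      _ = (k:ℝ) := by field_simp
  · rw [div_lt_iff₀ (by positivity)]
    have h2 : s^2 < (16/9) * (q₀:ℝ)^2 := by nlinarith
    rw [hsq] at h2
    have := mul_lt_mul_of_pos_left h2 hw0
    calc (k:ℝ) = w * ((k:ℝ)/w) := by field_simp
      _ < w * ((16/9) * (q₀:ℝ)^2) := this
      _ = 16/9 * (w * (q₀:ℝ)^2) := by ring
end

section
/- Let k ≥ 5 be an integer and let w ∈ ℝ with w ≥ 1 and 2/9 < w/k ≤ 1/4. Then max{(k+1)²/(4kw), 4kw/(k−1)²} ≤ 1.62. -/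
theorem case4_odd_aspect_ratio (k : ℕ) (hk : 5 ≤ k) (w : ℝ) (hw : 1 ≤ w)
    (h1 : 2 / 9 < w / k) (h2 : w / k ≤ 1 / 4) :
    max (((k : ℝ) + 1) ^ 2 / (4 * k * w)) (4 * k * w / ((k : ℝ) - 1) ^ 2)
      ≤ 1.62 := by
  have hK : (5:ℝ) ≤ k := by exact_mod_cast hk
  have hK0 : (0:ℝ) < k := by linarith
  have hw1 : 2 * (k:ℝ) < 9 * w := by
    rw [div_lt_div_iff₀ (by norm_num) hK0] at h1; linarith
  have hw2 : 4 * w ≤ (k:ℝ) := by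
    rw [div_le_div_iff₀ hK0 (by norm_num)] at h2; linarith
  have hw0 : (0:ℝ) < w := by linarith
  apply max_le
  · rw [div_le_iff₀ (by positivity)]
    nlinarith [sq_nonneg ((k:ℝ) - 5), mul_pos hK0 hw0,
      mul_lt_mul_of_pos_left hw1 hK0]
  · rw [div_le_iff₀ (by nlinarith : (0:ℝ) < ((k:ℝ) - 1) ^ 2)]
    nlinarith [sq_nonneg ((k:ℝ) - 5), mul_le_mul_of_nonneg_left hw2 hK0.le]
end
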